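/- Let n ≥ 2, let α, α̃ : ℝ^{n-1} → ℝ and β, β̃ : ℝ → ℝ be integrable functions with compact support, and suppose that ∫_ℝ β(y) dy = ∫_ℝ β̃(y) dy ≠ 0. Assume that for every ξ' ∈ ℝ^{n-1} and every ξₙ ∈ ℝ one has (∫_{ℝ^{n-1}} α(x') e^{i ξ'·x'} dx') · (∫_ℝ β(y) e^{ξₙ y} dy) = (∫_{ℝ^{n-1}} α̃(x') e^{i ξ'·x'} dx') · (∫_ℝ β̃(y) e^{ξₙ y} dy). Then α = α̃ almost everywhere on ℝ^{n-1}, and α(x')β(xₙ) = α̃(x')β̃(xₙ) for almost every (x', xₙ) ∈ ℝ^{n-1} × ℝ. -/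

import Mathlib

/-!
Putting `ξₙ = 0` and cancelling `∫ β = ∫ β' ≠ 0` gives `α̂ = α̂'`, hence `α = α'` a.e. by Fourier
uniqueness. If `α = 0` a.e. both products vanish a.e.; otherwise `α̂ ξ₀ ≠ 0` for some `ξ₀`, and
cancelling it shows that `β` and `β'` have the same two-sided Laplace transform on `ℝ`, hence
`β = β'` a.e.

Both uniqueness statements reduce to uniqueness theorems for finite measures by splitting a signed
density `f` into the measures `f⁺ dx` and `f⁻ dx`: a vanishing transform of `f` says that these
two measures have the same characteristic function, resp. the same moment generating function,
which is entire because the support is compact.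
-/

open MeasureTheory

namespace MeasureTheory

section SignedDensity

variable {X E : Type*} [MeasurableSpace X] [NormedAddCommGroup E] [NormedSpace ℝ E]
  {μ : Measure X} {f : X → ℝ} {g : X → E}

theorem integral_withDensity_ofReal (hf : AEMeasurable f μ) (g : X → E) :
    ∫ x, g x ∂μ.withDensity (fun x => ENNReal.ofReal (f x)) = ∫ x, max (f x) 0 • g x ∂μ := by
  simp_rw [← Real.coe_toNNReal', ← NNReal.smul_def]
  exact integral_withDensity_eq_integral_smul₀ hf.real_toNNReal g

theorem Integrable.max_zero_smul (hf : AEMeasurable f μ) (hg : AEStronglyMeasurable g μ)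
    (hfg : Integrable (fun x => f x • g x) μ) : Integrable (fun x => max (f x) 0 • g x) μ := by
  refine hfg.mono ((hf.max aemeasurable_const).aestronglyMeasurable.smul hg)
    (.of_forall fun x => ?_)
  simp only [norm_smul, Real.norm_eq_abs]
  refine mul_le_mul_of_nonneg_right ?_ (norm_nonneg _)
  rw [abs_of_nonneg (le_max_right _ _)]
  exact max_le (le_abs_self _) (abs_nonneg _)

theorem integrable_withDensity_ofReal (hf : AEMeasurable f μ) (hg : AEStronglyMeasurable g μ)
    (hfg : Integrable (fun x => f x • g x) μ) :
    Integrable g (μ.withDensity fun x => ENNReal.ofReal (f x)) := by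
  refine (integrable_withDensity_iff_integrable_smul₀ hf.real_toNNReal).mpr ?_
  simpa only [NNReal.smul_def, Real.coe_toNNReal'] using hfg.max_zero_smul hf hg

theorem integral_withDensity_ofReal_sub_neg (hf : AEMeasurable f μ)
    (hg : AEStronglyMeasurable g μ) (hfg : Integrable (fun x => f x • g x) μ) :
    ∫ x, g x ∂μ.withDensity (fun x => ENNReal.ofReal (f x))
      - ∫ x, g x ∂μ.withDensity (fun x => ENNReal.ofReal (-f x)) = ∫ x, f x • g x ∂μ := by
  have hfg' : Integrable (fun x => -f x • g x) μ := by simpa only [neg_smul] using hfg.fun_neg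
  rw [integral_withDensity_ofReal hf, integral_withDensity_ofReal (f := fun x => -f x) hf.neg,
    ← integral_sub (hfg.max_zero_smul hf hg) (hfg'.max_zero_smul (f := fun x => -f x) hf.neg hg)]
  simp_rw [← sub_smul, max_zero_sub_max_neg_zero_eq_self]

theorem ae_eq_zero_of_withDensity_ofReal_eq_neg (hf : Integrable f μ)
    (h : μ.withDensity (fun x => ENNReal.ofReal (f x))
      = μ.withDensity (fun x => ENNReal.ofReal (-f x))) : f =ᵐ[μ] 0 := by
  rw [withDensity_eq_iff hf.aemeasurable.ennreal_ofReal
    (g := fun x => ENNReal.ofReal (-f x)) hf.aemeasurable.neg.ennreal_ofReal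
    hf.lintegral_lt_top.ne] at h
  filter_upwards [h] with x hx
  have hmax := congrArg ENNReal.toReal hx
  rw [ENNReal.toReal_ofReal', ENNReal.toReal_ofReal'] at hmax
  rw [Pi.zero_apply, ← max_zero_sub_max_neg_zero_eq_self (f x), hmax, sub_self]

end SignedDensity

theorem Integrable.smul_continuous_of_hasCompactSupport {X E : Type*}
    [TopologicalSpace X] [T2Space X] [MeasurableSpace X] [OpensMeasurableSpace X]
    [NormedAddCommGroup E] [NormedSpace ℝ E] [SecondCountableTopologyEither X E]
    {μ : Measure X} {f : X → ℝ} (hf : Integrable f μ) (hfs : HasCompactSupport f)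
    {g : X → E} (hg : Continuous g) : Integrable (fun x => f x • g x) μ :=
  (integrableOn_iff_integrable_of_support_subset
    ((Function.support_smul_subset_left f g).trans (subset_tsupport f))).mp
    (hf.integrableOn.smul_continuousOn hg.continuousOn hfs)

theorem ae_eq_zero_of_integral_smul_char_eq_zero {V W : Type*} [AddCommGroup V] [Module ℝ V]
    [PseudoEMetricSpace V] [MeasurableSpace V] [BorelSpace V] [CompleteSpace V]
    [SecondCountableTopology V] [AddCommGroup W] [Module ℝ W] [TopologicalSpace W]
    {e : AddChar ℝ Circle} {L : V →ₗ[ℝ] W →ₗ[ℝ] ℝ} (he : Continuous e) (he' : e ≠ 1)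
    (hL' : ∀ v ≠ 0, L v ≠ 0) (hL : Continuous fun p : V × W ↦ L p.1 p.2) {μ : Measure V}
    {f : V → ℝ} (hf : Integrable f μ)
    (h : ∀ w, ∫ v, f v • BoundedContinuousFunction.char he hL w v ∂μ = 0) : f =ᵐ[μ] 0 := by
  have := isFiniteMeasure_withDensity_ofReal hf.hasFiniteIntegral
  have := isFiniteMeasure_withDensity_ofReal hf.neg.hasFiniteIntegral
  refine ae_eq_zero_of_withDensity_ofReal_eq_neg hf
    (ext_of_integral_char_eq he he' hL' hL fun w => ?_)
  rw [← sub_eq_zero, integral_withDensity_ofReal_sub_neg hf.aemeasurable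
    (BoundedContinuousFunction.char he hL w).continuous.aestronglyMeasurable
    (hf.smul_of_top_left (BoundedContinuousFunction.char he hL w).memLp_top), h w]

theorem ae_eq_prod_mul {X Y : Type*} [MeasurableSpace X] [MeasurableSpace Y] {μ : Measure X}
    {ν : Measure Y} [SFinite ν] {a a' : X → ℝ} {b b' : Y → ℝ} (ha : a =ᵐ[μ] a')
    (hb : b =ᵐ[ν] b') :
    (fun p : X × Y => a p.1 * b p.2) =ᵐ[μ.prod ν] fun p => a' p.1 * b' p.2 :=
  (ha.comp_tendsto Measure.quasiMeasurePreserving_fst.tendsto_ae).mul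
    (hb.comp_tendsto Measure.quasiMeasurePreserving_snd.tendsto_ae)

end MeasureTheory

open Complex

noncomputable def fourierPi {m : ℕ} (α : (Fin m → ℝ) → ℝ) (ξ : Fin m → ℝ) : ℂ :=
  ∫ x, (α x : ℂ) * cexp (I * ∑ j, (ξ j : ℂ) * (x j : ℂ))

section fourierPi

variable {m : ℕ} {α α' : (Fin m → ℝ) → ℝ}

theorem integrable_fourierPi_integrand (hα : Integrable α) (ξ : Fin m → ℝ) :
    Integrable fun x => (α x : ℂ) * cexp (I * ∑ j, (ξ j : ℂ) * (x j : ℂ)) := by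
  refine hα.ofReal.mul_bdd (c := 1) (Continuous.aestronglyMeasurable (by fun_prop))
    (.of_forall fun x => ?_)
  push_cast [← ofReal_mul, ← ofReal_sum]
  exact (norm_exp_I_mul_ofReal _).le

theorem fourierPi_sub (hα : Integrable α) (hα' : Integrable α') (ξ : Fin m → ℝ) :
    fourierPi (α - α') ξ = fourierPi α ξ - fourierPi α' ξ := by
  simp_rw [fourierPi, Pi.sub_apply, ofReal_sub, sub_mul]
  exact integral_sub (integrable_fourierPi_integrand hα ξ)
    (integrable_fourierPi_integrand hα' ξ)

theorem ae_eq_zero_of_fourierPi_eq_zero (hα : Integrable α) (h : ∀ ξ, fourierPi α ξ = 0) :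
    α =ᵐ[volume] 0 := by
  have hL : Continuous fun p : (Fin m → ℝ) × (Fin m → ℝ) ↦ dotProductBilin ℝ ℝ p.1 p.2 := by
    fun_prop
  refine ae_eq_zero_of_integral_smul_char_eq_zero Real.continuous_probChar Real.probChar_ne_one
    (fun v hv hv0 => hv (dotProduct_self_eq_zero.mp (LinearMap.congr_fun hv0 v))) hL hα
    fun ξ => ?_
  rw [← h ξ, fourierPi]
  congr 1 with x
  simp only [BoundedContinuousFunction.char_apply, Real.probChar_apply,
    dotProductBilin_apply_apply, dotProduct, real_smul, ofReal_sum, ofReal_mul, Finset.mul_sum,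
    Finset.sum_mul]
  exact congrArg _ (congrArg cexp (Finset.sum_congr rfl fun j _ => by ring))

theorem ae_eq_of_fourierPi_eq (hα : Integrable α) (hα' : Integrable α')
    (h : fourierPi α = fourierPi α') : α =ᵐ[volume] α' :=
  Filter.eventuallyEq_iff_sub.mpr <| ae_eq_zero_of_fourierPi_eq_zero (hα.sub hα') fun ξ => by
    rw [fourierPi_sub hα hα', h, sub_self]

end fourierPi

noncomputable def bilateralLaplace (β : ℝ → ℝ) (t : ℝ) : ℂ :=
  ∫ y, (β y : ℂ) * cexp (t * y)

section bilateralLaplace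

variable {β β' : ℝ → ℝ}

theorem bilateralLaplace_zero (β : ℝ → ℝ) : bilateralLaplace β 0 = ((∫ y, β y : ℝ) : ℂ) := by
  simpa [bilateralLaplace] using integral_complex_ofReal

theorem bilateralLaplace_sub (hβ : Integrable β) (hβs : HasCompactSupport β) (hβ' : Integrable β')
    (hβ's : HasCompactSupport β') (t : ℝ) :
    bilateralLaplace (β - β') t = bilateralLaplace β t - bilateralLaplace β' t := by
  have hexp : Continuous fun y : ℝ => cexp (t * y) := by fun_prop
  simp_rw [bilateralLaplace, Pi.sub_apply, ofReal_sub, sub_mul, ← real_smul]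
  exact integral_sub (hβ.smul_continuous_of_hasCompactSupport hβs hexp)
    (hβ'.smul_continuous_of_hasCompactSupport hβ's hexp)

open ProbabilityTheory in
theorem ae_eq_zero_of_bilateralLaplace_eq_zero (hβ : Integrable β) (hβs : HasCompactSupport β)
    (h : ∀ t, bilateralLaplace β t = 0) : β =ᵐ[volume] 0 := by
  set μp := volume.withDensity fun y => ENNReal.ofReal (β y)
  set μn := volume.withDensity fun y => ENNReal.ofReal (-β y)
  have := isFiniteMeasure_withDensity_ofReal hβ.hasFiniteIntegral
  have := isFiniteMeasure_withDensity_ofReal hβ.neg.hasFiniteIntegral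
  have hmgf : mgf id μp = mgf id μn := funext fun t => by
    have hexp : Continuous fun y : ℝ => cexp (t * y) := by fun_prop
    have hdiff : complexMGF id μp t - complexMGF id μn t = bilateralLaplace β t := by
      simp_rw [bilateralLaplace, ← real_smul]
      exact integral_withDensity_ofReal_sub_neg hβ.aemeasurable hexp.aestronglyMeasurable
        (hβ.smul_continuous_of_hasCompactSupport hβs hexp)
    rw [h t, sub_eq_zero, complexMGF_ofReal, complexMGF_ofReal] at hdiff
    exact_mod_cast hdiff
  have hμ : μp = 0 ↔ μn = 0 := by
    have hmass := congrFun hmgf 0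
    rw [mgf_zero', mgf_zero'] at hmass
    rw [← Measure.measure_univ_eq_zero, ← Measure.measure_univ_eq_zero,
      ← measureReal_eq_zero_iff, ← measureReal_eq_zero_iff, hmass]
  have hstrip (z : ℂ) : z.re ∈ interior (integrableExpSet id μp) := by
    have hentire : integrableExpSet id μp = Set.univ := Set.eq_univ_of_forall fun t => by
      have hexp : Continuous fun y : ℝ => Real.exp (t * y) := by fun_prop
      exact integrable_withDensity_ofReal hβ.aemeasurable hexp.aestronglyMeasurable
        (hβ.smul_continuous_of_hasCompactSupport hβs hexp)
    simp [hentire]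
  refine ae_eq_zero_of_withDensity_ofReal_eq_neg hβ (Measure.ext_of_complexMGF_id_eq ?_)
  exact funext fun z => eqOn_complexMGF_of_mgf' hmgf hμ (hstrip z)

theorem ae_eq_of_bilateralLaplace_eq (hβ : Integrable β) (hβs : HasCompactSupport β)
    (hβ' : Integrable β') (hβ's : HasCompactSupport β')
    (h : bilateralLaplace β = bilateralLaplace β') : β =ᵐ[volume] β' :=
  Filter.eventuallyEq_iff_sub.mpr <|
    ae_eq_zero_of_bilateralLaplace_eq_zero (hβ.sub hβ') (hβs.sub hβ's) fun t => by
      rw [bilateralLaplace_sub hβ hβs hβ' hβ's, h, sub_self]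

end bilateralLaplace

theorem stmt_0_general (n : ℕ)
    (α α' : (Fin (n - 1) → ℝ) → ℝ) (β β' : ℝ → ℝ)
    (hαInt : Integrable α) (hα'Int : Integrable α')
    (hβInt : Integrable β) (hβ'Int : Integrable β')
    (hβsupp : HasCompactSupport β) (hβ'supp : HasCompactSupport β')
    (hβeq : ∫ y : ℝ, β y = ∫ y : ℝ, β' y)
    (hβne : (∫ y : ℝ, β y) ≠ 0)
    (h : ∀ (ξ : Fin (n - 1) → ℝ) (ξn : ℝ),
      (∫ x : Fin (n - 1) → ℝ,
          (α x : ℂ) * Complex.exp (Complex.I * ∑ j, (ξ j : ℂ) * (x j : ℂ))) *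
        (∫ y : ℝ, (β y : ℂ) * Complex.exp ((ξn : ℂ) * (y : ℂ))) =
      (∫ x : Fin (n - 1) → ℝ,
          (α' x : ℂ) * Complex.exp (Complex.I * ∑ j, (ξ j : ℂ) * (x j : ℂ))) *
        (∫ y : ℝ, (β' y : ℂ) * Complex.exp ((ξn : ℂ) * (y : ℂ)))) :
    α =ᵐ[volume] α' ∧
      (fun p : (Fin (n - 1) → ℝ) × ℝ => α p.1 * β p.2)
        =ᵐ[volume] (fun p : (Fin (n - 1) → ℝ) × ℝ => α' p.1 * β' p.2) := by
  have hprod : ∀ ξ t,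
      fourierPi α ξ * bilateralLaplace β t = fourierPi α' ξ * bilateralLaplace β' t := h
  have hfourier : fourierPi α = fourierPi α' := funext fun ξ => by
    have h0 := hprod ξ 0
    rw [bilateralLaplace_zero, bilateralLaplace_zero, ← hβeq] at h0
    exact mul_right_cancel₀ (ofReal_ne_zero.mpr hβne) h0
  have hαα' : α =ᵐ[volume] α' := ae_eq_of_fourierPi_eq hαInt hα'Int hfourier
  refine ⟨hαα', ?_⟩
  by_cases hα0 : α =ᵐ[volume] 0
  · have hzero {a : (Fin (n - 1) → ℝ) → ℝ} (b : ℝ → ℝ) (ha : a =ᵐ[volume] 0) :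
        (fun p : (Fin (n - 1) → ℝ) × ℝ => a p.1 * b p.2) =ᵐ[volume] 0 := by
      rw [Measure.volume_eq_prod]
      simpa [Pi.zero_def] using ae_eq_prod_mul ha (Filter.EventuallyEq.refl _ b)
    exact (hzero β hα0).trans (hzero β' (hαα'.symm.trans hα0)).symm
  obtain ⟨ξ, hξ⟩ : ∃ ξ, fourierPi α ξ ≠ 0 := by
    by_contra! hvanish
    exact hα0 (ae_eq_zero_of_fourierPi_eq_zero hαInt hvanish)
  have hlaplace : bilateralLaplace β = bilateralLaplace β' := funext fun t =>
    mul_left_cancel₀ hξ (by rw [hprod, hfourier])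
  exact ae_eq_prod_mul hαα'
    (ae_eq_of_bilateralLaplace_eq hβInt hβsupp hβ'Int hβ'supp hlaplace)

/-- Lemma 2.2 of the paper (multiplicative separable form, comparison version). -/
theorem stmt_0 (n : ℕ) (hn : 2 ≤ n)
    (α α' : (Fin (n - 1) → ℝ) → ℝ) (β β' : ℝ → ℝ)
    (hαInt : Integrable α) (hα'Int : Integrable α')
    (hβInt : Integrable β) (hβ'Int : Integrable β')
    (hαsupp : HasCompactSupport α) (hα'supp : HasCompactSupport α')
    (hβsupp : HasCompactSupport β) (hβ'supp : HasCompactSupport β')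
    (hβeq : ∫ y : ℝ, β y = ∫ y : ℝ, β' y)
    (hβne : (∫ y : ℝ, β y) ≠ 0)
    (h : ∀ (ξ : Fin (n - 1) → ℝ) (ξn : ℝ),
      (∫ x : Fin (n - 1) → ℝ,
          (α x : ℂ) * Complex.exp (Complex.I * ∑ j, (ξ j : ℂ) * (x j : ℂ))) *
        (∫ y : ℝ, (β y : ℂ) * Complex.exp ((ξn : ℂ) * (y : ℂ))) =
      (∫ x : Fin (n - 1) → ℝ,
          (α' x : ℂ) * Complex.exp (Complex.I * ∑ j, (ξ j : ℂ) * (x j : ℂ))) *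
        (∫ y : ℝ, (β' y : ℂ) * Complex.exp ((ξn : ℂ) * (y : ℂ)))) :
    α =ᵐ[volume] α' ∧
      (fun p : (Fin (n - 1) → ℝ) × ℝ => α p.1 * β p.2)
        =ᵐ[volume] (fun p : (Fin (n - 1) → ℝ) × ℝ => α' p.1 * β' p.2) :=
  stmt_0_general n α α' β β' hαInt hα'Int hβInt hβ'Int hβsupp hβ'supp hβeq hβne h
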